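/- There exist sets A, B, C ⊆ ℕ such that B generically computes A, C generically computes B, but C does not generically compute A; in other words, relative generic computation is not transitive. -/

import Mathlib

open Filter Topology

/-- `A ⊆ ℕ` has density 1 if the densities of its initial segments tend to 1. -/
def Density1 (A : Set ℕ) : Prop :=
  Tendsto (fun n : ℕ => ((A ∩ Set.Iio n).ncard : ℝ) / n) atTop (𝓝 1)

/-- The length-`k` initial segment of an oracle `X : ℕ → ℕ`. -/
def oracleSeg (X : ℕ → ℕ) (k : ℕ) : List ℕ := List.ofFn (fun i : Fin k => X i)

/-- A Turing functional, presented by a partial computable, monotone map on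
finite oracle strings (the "use" presentation). -/
structure TuringFunctional where
  f : List ℕ → ℕ →. ℕ
  computable : Partrec₂ f
  mono : ∀ σ τ : List ℕ, σ <+: τ → ∀ n m, m ∈ f σ n → m ∈ f τ n

/-- Evaluation of a Turing functional on a total oracle `X : ℕ → ℕ`. -/
noncomputable def TuringFunctional.eval (φ : TuringFunctional) (X : ℕ → ℕ) (n : ℕ) :
    Part ℕ :=
  ⟨∃ k, ((φ.f (oracleSeg X k) n).Dom),
   fun h => (φ.f (oracleSeg X h.choose) n).get h.choose_spec⟩

open Classical in
/-- The characteristic function of a set of naturals. -/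
noncomputable def setChar (A : Set ℕ) : ℕ → ℕ := fun n => if n ∈ A then 1 else 0

/-- Evaluation of a Turing functional with a set of naturals as (total) oracle. -/
noncomputable def TuringFunctional.evalSet (φ : TuringFunctional) (O : Set ℕ) : ℕ →. ℕ :=
  fun n => φ.eval (setChar O) n

/-- A partial function is a generic computation of `A` if its domain has density 1,
its values lie in `{0,1}`, and it is correct about `A` wherever it halts. -/
def IsGenericComputation (f : ℕ →. ℕ) (A : Set ℕ) : Prop :=
  Density1 f.Dom ∧ ∀ n m, m ∈ f n → (n ∈ A ∧ m = 1) ∨ (n ∉ A ∧ m = 0)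

/-- A (time-dependent) partial oracle for `A`: a set of coded triples `⟨n,x,l⟩`
which never lies about membership in `A`. -/
def IsPartialOracle (O A : Set ℕ) : Prop :=
  (∀ n l, Nat.pair n (Nat.pair 0 l) ∈ O → n ∉ A) ∧
  (∀ n l, Nat.pair n (Nat.pair 1 l) ∈ O → n ∈ A)

/-- The domain of a partial oracle. -/
def oracleDomain (O : Set ℕ) : Set ℕ :=
  {n | ∃ x l, Nat.pair n (Nat.pair x l) ∈ O}

/-- A generic oracle for `A` is a partial oracle for `A` with density-1 domain. -/
def IsGenericOracle (O A : Set ℕ) : Prop :=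
  IsPartialOracle O A ∧ Density1 (oracleDomain O)

/-- `A` is (uniformly) generically reducible to `B`:  `B ≥_g A`. -/
def GenRedTo (A B : Set ℕ) : Prop :=
  ∃ φ : TuringFunctional, ∀ O : Set ℕ, IsGenericOracle O B →
    IsGenericComputation (φ.evalSet O) A

/-- Generic equivalence `A ≡_g B`. -/
def GenEquiv (A B : Set ℕ) : Prop := GenRedTo A B ∧ GenRedTo B A

/-- `B` generically computes `A`. -/
def GenericallyComputes (B A : Set ℕ) : Prop :=
  ∃ φ : TuringFunctional, IsGenericComputation (φ.evalSet B) A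

/-- `A` is generically computable. -/
def GenericallyComputable (A : Set ℕ) : Prop :=
  ∃ f : ℕ →. ℕ, Partrec f ∧ IsGenericComputation f A

/-- Turing reducibility `A ≤_T B` for sets of naturals. -/
def TuringRedTo (A B : Set ℕ) : Prop :=
  ∃ φ : TuringFunctional, ∀ n, φ.evalSet B n = Part.some (setChar A n)

/-- The embedding `X ↦ R(X)` of Turing degrees into generic degrees. -/
def RSet (X : Set ℕ) : Set ℕ := {n | ∃ m k, m ∈ X ∧ Odd k ∧ n = 2 ^ m * k}

/-- The recursive join of two sets. -/
def setJoin (A B : Set ℕ) : Set ℕ :=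
  {n | (∃ k, n = 2 * k ∧ k ∈ A) ∨ (∃ k, n = 2 * k + 1 ∧ k ∈ B)}

/-!
Take `K` the halting set, `A = {n | log₂ n ∈ K}` and `B = {2 ^ k | k ∈ K}`. Then `B` computes `A`
outright (query `B` at `2 ^ log₂ n`), and `B` is generically computable (answer `0` off the powers
of `2`, a set of density `0`). But a generic computation of `A` must halt somewhere in every dyadic
block `[2 ^ k, 2 ^ (k + 1))` for large `k`, since a set missing such a block has density at most
`1 / 2` at `2 ^ (k + 1)`; searching the blocks in parallel decides `K`.
-/

section Density

lemma Density1.eventually_exists_mem_Ico_two_pow {S : Set ℕ} (hS : Density1 S) :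
    ∀ᶠ k in atTop, ∃ n ∈ S, 2 ^ k ≤ n ∧ n < 2 ^ (k + 1) := by
  have hhalf : ∀ᶠ k : ℕ in atTop,
      (1 / 2 : ℝ) < ((S ∩ Set.Iio (2 ^ (k + 1))).ncard : ℝ) / (2 ^ (k + 1) : ℕ) :=
    (tendsto_pow_atTop_atTop_of_one_lt one_lt_two).comp (tendsto_add_atTop_nat 1)
      |>.eventually (hS.eventually (lt_mem_nhds (by norm_num)))
  filter_upwards [hhalf] with k hk
  by_contra! hmiss
  have hsub : S ∩ Set.Iio (2 ^ (k + 1)) ⊆ Set.Iio (2 ^ k) :=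
    fun n ⟨hnS, hn⟩ => not_le.1 fun h => (hmiss n hnS h).not_gt hn
  have hcard : ((S ∩ Set.Iio (2 ^ (k + 1))).ncard : ℝ) ≤ 2 ^ k := by
    exact_mod_cast (Set.ncard_le_ncard hsub (Set.finite_Iio _)).trans_eq (Set.ncard_Iio_nat _)
  rw [lt_div_iff₀ (by positivity)] at hk
  push_cast at hk
  rw [pow_succ] at hk
  linarith

lemma density1_of_ncard_sdiff_le {S : Set ℕ} {b : ℕ → ℕ}
    (hb : Tendsto (fun n : ℕ => (b n : ℝ) / n) atTop (𝓝 0))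
    (hS : ∀ n, (Set.Iio n \ S).ncard ≤ b n) : Density1 S := by
  have hsplit (n : ℕ) : ((S ∩ Set.Iio n).ncard : ℝ) + (Set.Iio n \ S).ncard = n := by
    rw [Set.inter_comm]
    exact_mod_cast (Set.ncard_inter_add_ncard_sdiff_eq_ncard _ _ (Set.finite_Iio n)).trans
      (Set.ncard_Iio_nat n)
  have hlower : Tendsto (fun n : ℕ => 1 - (b n : ℝ) / n) atTop (𝓝 1) := by
    simpa using tendsto_const_nhds.sub hb
  refine tendsto_of_tendsto_of_tendsto_of_le_of_le' hlower tendsto_const_nhds ?_ ?_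
  all_goals filter_upwards [eventually_gt_atTop 0] with n hn
  all_goals have hn' : (0 : ℝ) < n := by exact_mod_cast hn
  all_goals have hsn := hsplit n
  · have : ((Set.Iio n \ S).ncard : ℝ) ≤ b n := by exact_mod_cast hS n
    rw [one_sub_div hn'.ne', div_le_div_iff_of_pos_right hn']
    linarith
  · rw [div_le_one hn']
    linarith

lemma density1_univ : Density1 (Set.univ : Set ℕ) :=
  density1_of_ncard_sdiff_le (b := 0) (by simp) fun n => by simp

lemma tendsto_nat_log_add_one_div (b : ℕ) :
    Tendsto (fun n : ℕ => ((Nat.log b n + 1 : ℕ) : ℝ) / n) atTop (𝓝 0) := by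
  have hlogb : Tendsto (fun n : ℕ => Real.logb b n / n) atTop (𝓝 0) :=
    Real.isLittleO_logb_id_atTop.tendsto_div_nhds_zero.comp tendsto_natCast_atTop_atTop
  refine squeeze_zero' (Eventually.of_forall fun n => by positivity) ?_
    (by simpa using hlogb.add tendsto_one_div_atTop_nhds_zero_nat)
  filter_upwards with n
  rw [← one_div, ← add_div]
  gcongr
  push_cast
  exact add_le_add_left (Real.natLog_le_logb n b) 1

lemma ncard_range_pow_inter_Iio_le {b : ℕ} (hb : 1 < b) (n : ℕ) :
    (Set.range (b ^ ·) ∩ Set.Iio n).ncard ≤ Nat.log b n + 1 := by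
  have hsub : Set.range (b ^ ·) ∩ Set.Iio n ⊆ (b ^ ·) '' Set.Iio (Nat.log b n + 1) := by
    rintro _ ⟨⟨k, rfl⟩, hk⟩
    exact ⟨k, Nat.lt_succ_of_le (Nat.le_log_of_pow_le hb (le_of_lt hk)), rfl⟩
  calc (Set.range (b ^ ·) ∩ Set.Iio n).ncard
      ≤ ((b ^ ·) '' Set.Iio (Nat.log b n + 1)).ncard :=
        Set.ncard_le_ncard hsub ((Set.finite_Iio _).image _)
    _ ≤ Nat.log b n + 1 := (Set.ncard_image_le (Set.finite_Iio _)).trans_eq (Set.ncard_Iio_nat _)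

lemma density1_compl_range_pow {b : ℕ} (hb : 1 < b) : Density1 (Set.range (b ^ ·))ᶜ :=
  density1_of_ncard_sdiff_le (tendsto_nat_log_add_one_div b) fun n => by
    rw [Set.sdiff_compl, Set.inter_comm]
    exact ncard_range_pow_inter_Iio_le hb n

end Density

section Computability

theorem Primrec.nat_pow : Primrec₂ ((· ^ ·) : ℕ → ℕ → ℕ) :=
  Primrec₂.unpaired'.1 Nat.Primrec.pow

theorem Primrec.nat_log (b : ℕ) : Primrec (Nat.log b) := by
  refine Primrec.of_graph ⟨id, .id, fun n => Nat.log_le_self b n⟩ ?_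
  have hgraph : PrimrecRel fun (n k : ℕ) =>
      (k = 0 ∧ (b ≤ 1 ∨ n = 0)) ∨ (b ^ k ≤ n ∧ n < b ^ (k + 1)) :=
    .or (.and (Primrec.eq.comp .snd (.const 0))
          (.or (Primrec.nat_le.comp (.const b) (.const 1)) (Primrec.eq.comp .fst (.const 0))))
      (.and (Primrec.nat_le.comp (Primrec.nat_pow.comp (.const b) .snd) .fst)
        (Primrec.nat_lt.comp .fst (Primrec.nat_pow.comp (.const b) (Primrec.succ.comp .snd))))
  refine hgraph.of_eq fun n k => ?_
  constructor
  · rintro (⟨rfl, hb | rfl⟩ | ⟨h₁, h₂⟩)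
    · exact Nat.log_of_left_le_one hb n
    · exact Nat.log_zero_right b
    · exact Nat.log_eq_of_pow_le_of_lt_pow h₁ h₂
  · rintro rfl
    by_cases h : 1 < b ∧ n ≠ 0
    · exact .inr ((Nat.log_eq_iff (.inr h)).1 rfl)
    · refine .inl ⟨?_, by omega⟩
      rcases not_and_or.1 h with hb | hn
      · exact Nat.log_of_left_le_one (by omega) n
      · rw [not_not.1 hn, Nat.log_zero_right]

lemma computablePred_mem_range_pow {b : ℕ} (hb : 1 < b) : ComputablePred (· ∈ Set.range (b ^ ·)) :=
  (Primrec.eq.comp (Primrec.nat_pow.comp (.const b) (Primrec.nat_log b)) .id).computablePred.of_eq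
    fun n => ⟨fun h => ⟨_, h⟩, by rintro ⟨k, rfl⟩; simp [Nat.log_pow hb]⟩

open Nat.Partrec.Code in
theorem Partrec.exists_dovetail {α σ : Type*} [Primcodable α] [Primcodable σ]
    {f : α → ℕ →. σ} (hf : Partrec₂ f) :
    ∃ g : α →. σ, Partrec g ∧
      ∀ a, (∀ x ∈ g a, ∃ n, x ∈ f a n) ∧ ((g a).Dom ↔ ∃ n, (f a n).Dom) := by
  obtain ⟨c, hc⟩ := exists_code.1 hf
  have hstage (a : α) (n t : ℕ) (x : σ) :
      x ∈ (evaln t c (Encodable.encode (a, n))).bind Encodable.decode → x ∈ f a n := by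
    intro hx
    obtain ⟨y, hy, hxy⟩ := Option.mem_bind_iff.1 hx
    have := evaln_sound hy
    simp only [hc, Encodable.encodek, Part.coe_some, Part.bind_some, Part.mem_map_iff] at this
    obtain ⟨z, hz, rfl⟩ := this
    rw [Encodable.encodek, Option.mem_some_iff] at hxy
    rwa [← hxy]
  -- stage `Nat.pair n t` runs the computation of `f a n` for `t` steps
  refine ⟨fun a => Nat.rfindOpt fun s =>
      (evaln s.unpair.2 c (Encodable.encode (a, s.unpair.1))).bind Encodable.decode, ?_, ?_⟩
  · refine Partrec.rfindOpt (Primrec.to_comp ?_)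
    exact Primrec.option_bind
      (primrec_evaln.comp (((Primrec.snd.comp (Primrec.unpair.comp .snd)).pair (.const c)).pair
        (Primrec.encode.comp (Primrec.fst.pair (Primrec.fst.comp (Primrec.unpair.comp .snd))))))
      (Primrec.decode.comp .snd)
  intro a
  have hmem : ∀ x ∈ Nat.rfindOpt (fun s =>
      (evaln s.unpair.2 c (Encodable.encode (a, s.unpair.1))).bind Encodable.decode),
      ∃ n, x ∈ f a n := fun x hx =>
    let ⟨s, hs⟩ := Nat.rfindOpt_spec hx
    ⟨_, hstage a _ _ x hs⟩
  refine ⟨hmem, fun h => (hmem _ ⟨h, rfl⟩).imp fun n hn => Part.dom_iff_mem.2 ⟨_, hn⟩,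
    fun ⟨n, hn⟩ => ?_⟩
  obtain ⟨x, hx⟩ := Part.dom_iff_mem.1 hn
  obtain ⟨t, ht⟩ := evaln_complete.1 (show Encodable.encode x ∈ c.eval (Encodable.encode (a, n)) by
    simpa [hc, Encodable.encodek] using hx)
  refine Nat.rfindOpt_dom.2 ⟨Nat.pair n t, x, ?_⟩
  rw [Nat.unpair_pair]
  exact Option.mem_bind_iff.2 ⟨_, ht, Encodable.encodek x⟩

theorem Computable.of_eventually_mem {σ : Type*} [Primcodable σ] {f : ℕ → σ} {g : ℕ →. σ}
    (hg : Partrec g) (h : ∀ᶠ n in atTop, f n ∈ g n) : Computable f := by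
  obtain ⟨N, hN⟩ := eventually_atTop.1 h
  let table := (List.range N).map f
  have hpatch : Partrec fun n => bif decide (n < N) then Part.some (table.getD n (f 0)) else g n :=
    Partrec.cond (Primrec.nat_lt.comp .id (.const N)).decide.to_comp
      ((Primrec.list_getD _).comp (.const table) .id).to_comp.partrec hg
  refine hpatch.of_eq_tot fun n => ?_
  by_cases hn : n < N
  · simp [hn, table]
  · simpa [hn] using hN n (not_lt.1 hn)

end Computability

lemma oracleSeg_getElem? (X : ℕ → ℕ) {i k : ℕ} (h : i < k) : (oracleSeg X k)[i]? = some (X i) := by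
  simp [oracleSeg, h]

lemma oracleSeg_prefix (X : ℕ → ℕ) {j k : ℕ} (h : j ≤ k) : oracleSeg X j <+: oracleSeg X k :=
  List.prefix_iff_getElem?.2 fun i hi => by
    simp only [oracleSeg, List.length_ofFn] at hi
    simp [oracleSeg, lt_of_lt_of_le hi h]

lemma computable_oracleSeg {X : ℕ → ℕ} (hX : Computable X) : Computable (oracleSeg X) := by
  have hrec : Computable fun k : ℕ =>
      Nat.rec (motive := fun _ => List ℕ) [] (fun j seg => seg ++ [X j]) k :=
    Computable.nat_rec .id (.const []) <| Computable.to₂ <|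
      Primrec.list_append.to_comp.comp (Computable.snd.comp .snd)
        (Primrec.list_cons.to_comp.comp (hX.comp (Computable.fst.comp .snd)) (.const []))
  refine hrec.of_eq fun k => ?_
  induction k with
  | zero => rfl
  | succ k ih => rw [oracleSeg, List.ofFn_succ_last]; simp [ih, oracleSeg]

namespace TuringFunctional

lemma mem_eval_iff (φ : TuringFunctional) (X : ℕ → ℕ) (n m : ℕ) :
    m ∈ φ.eval X n ↔ ∃ j, m ∈ φ.f (oracleSeg X j) n := by
  have hunique {j k m m'} (hm : m ∈ φ.f (oracleSeg X j) n) (hm' : m' ∈ φ.f (oracleSeg X k) n) :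
      m = m' := by
    rcases le_total j k with h | h
    · exact Part.mem_unique (φ.mono _ _ (oracleSeg_prefix X h) n m hm) hm'
    · exact Part.mem_unique hm (φ.mono _ _ (oracleSeg_prefix X h) n m' hm')
  constructor
  · rintro ⟨h, rfl⟩
    exact ⟨h.choose, Part.get_mem h.choose_spec⟩
  · rintro ⟨j, hm⟩
    have hdom : ∃ k, (φ.f (oracleSeg X k) n).Dom := ⟨j, Part.dom_iff_mem.2 ⟨m, hm⟩⟩
    exact ⟨hdom, hunique (Part.get_mem hdom.choose_spec) hm⟩

theorem partrec_eval (φ : TuringFunctional) {X : ℕ → ℕ} (hX : Computable X) :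
    Partrec (φ.eval X) := by
  obtain ⟨g, hg, hgφ⟩ := Partrec.exists_dovetail (f := fun n j => φ.f (oracleSeg X j) n)
    (φ.computable.comp ((computable_oracleSeg hX).comp .snd) .fst)
  refine hg.of_eq fun n => Part.ext fun m => ⟨fun hm => (mem_eval_iff φ X n m).2 ((hgφ n).1 m hm),
    fun hm => ?_⟩
  obtain ⟨m', hm'⟩ := Part.dom_iff_mem.1 <|
    (hgφ n).2.2 (((mem_eval_iff φ X n m).1 hm).imp fun j hj => Part.dom_iff_mem.2 ⟨m, hj⟩)
  rwa [Part.mem_unique hm ((mem_eval_iff φ X n m').2 ((hgφ n).1 m' hm'))]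

def query (g : ℕ → ℕ) (hg : Primrec g) : TuringFunctional where
  f σ n := (σ[g n]? : Part ℕ)
  computable := (Primrec.list_getElem?.comp .fst (hg.comp .snd)).to_comp.ofOption
  mono σ τ hστ n m hm := by
    obtain ⟨hlt, hσ⟩ := List.getElem?_eq_some_iff.1 (Part.mem_ofOption.1 hm)
    exact Part.mem_ofOption.2 (by rw [List.prefix_iff_getElem?.1 hστ _ hlt, hσ]; rfl)

lemma query_evalSet {g : ℕ → ℕ} (hg : Primrec g) (B : Set ℕ) (n : ℕ) :
    (query g hg).evalSet B n = Part.some (setChar B (g n)) :=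
  Part.eq_some_iff.2 <| (mem_eval_iff _ _ _ _).2
    ⟨g n + 1, Part.mem_ofOption.2 (oracleSeg_getElem? _ (Nat.lt_succ_self _))⟩

end TuringFunctional

section Generic

lemma TuringRedTo.genericallyComputes {A B : Set ℕ} (h : TuringRedTo A B) :
    GenericallyComputes B A := by
  obtain ⟨φ, hφ⟩ := h
  refine ⟨φ, ?_, fun n m hm => ?_⟩
  · convert density1_univ
    exact Set.eq_univ_of_forall fun n => by simp [PFun.dom_eq, hφ n]
  · rw [hφ n, Part.mem_some_iff] at hm
    by_cases hn : n ∈ A <;> simp [hm, setChar, hn]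

lemma turingRedTo_preimage {g : ℕ → ℕ} (hg : Primrec g) (B : Set ℕ) : TuringRedTo (g ⁻¹' B) B :=
  ⟨.query g hg, TuringFunctional.query_evalSet hg B⟩

lemma GenericallyComputes.genericallyComputable {C A : Set ℕ} (h : GenericallyComputes C A)
    (hC : Computable (setChar C)) : GenericallyComputable A :=
  let ⟨φ, hφ⟩ := h
  ⟨_, φ.partrec_eval hC, hφ⟩

lemma GenericallyComputable.genericallyComputes {A : Set ℕ} (h : GenericallyComputable A)
    (C : Set ℕ) : GenericallyComputes C A := by
  obtain ⟨g, hg, hgA⟩ := h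
  let φ : TuringFunctional := ⟨fun _ n => g n, hg.comp .snd, fun _ _ _ _ _ hm => hm⟩
  have hφ : φ.evalSet C = g :=
    funext fun n => Part.ext fun m =>
      (φ.mem_eval_iff _ n m).trans ⟨fun ⟨_, hm⟩ => hm, fun hm => ⟨0, hm⟩⟩
  exact ⟨φ, hφ ▸ hgA⟩

lemma genericallyComputable_of_disjoint {D B : Set ℕ} (hD : ComputablePred (· ∈ D))
    (hDdens : Density1 D) (hDB : Disjoint D B) : GenericallyComputable B := by
  obtain ⟨_, hdec⟩ := hD
  refine ⟨fun n => bif decide (n ∈ D) then Part.some 0 else Part.none,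
    Partrec.cond hdec (Partrec.const' _) Partrec.none, ?_, fun n m hm => ?_⟩
  · convert hDdens
    ext n
    by_cases hn : n ∈ D <;> simp [hn]
  · by_cases hn : n ∈ D
    · simp_all [Set.disjoint_left.1 hDB hn]
    · simp [hn] at hm

end Generic

lemma computablePred_of_genericallyComputable_log_preimage {S : Set ℕ}
    (h : GenericallyComputable (Nat.log 2 ⁻¹' S)) : ComputablePred (· ∈ S) := by
  obtain ⟨g, hg, hdom, hcorr⟩ := h
  have hlog (k i : ℕ) : Nat.log 2 (2 ^ k + i % 2 ^ k) = k := by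
    refine Nat.log_eq_of_pow_le_of_lt_pow (Nat.le_add_right _ _) ?_
    have := Nat.mod_lt i (Nat.two_pow_pos k)
    rw [pow_succ]
    omega
  have hpow : Primrec fun p : ℕ × ℕ => 2 ^ p.1 := Primrec.nat_pow.comp (.const 2) .fst
  -- `i % 2 ^ k` keeps the search for `k` inside the block `[2 ^ k, 2 ^ (k + 1))`
  obtain ⟨search, hsearch, hspec⟩ :=
    Partrec.exists_dovetail (f := fun k i => g (2 ^ k + i % 2 ^ k))
      (hg.comp (Primrec.nat_add.comp hpow (Primrec.nat_mod.comp .snd hpow)).to_comp)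
  classical
  refine ⟨inferInstance, Computable.of_eventually_mem
    (hsearch.map (Primrec.beq.comp .snd (.const 1)).to_comp.to₂) ?_⟩
  filter_upwards [hdom.eventually_exists_mem_Ico_two_pow] with k ⟨n, hn, hkn, hnk⟩
  have hblock : (g (2 ^ k + (n - 2 ^ k) % 2 ^ k)).Dom := by
    rwa [Nat.mod_eq_of_lt (by rw [pow_succ] at hnk; omega), Nat.add_sub_cancel' hkn]
  obtain ⟨m, hm⟩ := Part.dom_iff_mem.1 ((hspec k).2.2 ⟨_, hblock⟩)
  obtain ⟨i, hi⟩ := (hspec k).1 m hm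
  refine (Part.mem_map_iff _).2 ⟨m, hm, ?_⟩
  rcases hcorr _ m hi with ⟨hmem, rfl⟩ | ⟨hmem, rfl⟩ <;> simp_all

section Halting

open Nat.Partrec (Code)

def haltingSet : Set ℕ := {k | ((Denumerable.ofNat Code k).eval 0).Dom}

lemma not_computablePred_haltingSet : ¬ ComputablePred (· ∈ haltingSet) := fun ⟨_, h⟩ =>
  ComputablePred.halting_problem 0 <|
    (h.comp Computable.encode).computablePred.of_eq fun c => by
      simp only [haltingSet, Set.mem_ofPred_eq, Denumerable.ofNat_encode]

end Halting

/-- relative generic computation is not transitive. -/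
theorem generic_computation_not_transitive :
    ∃ A B C : Set ℕ, GenericallyComputes B A ∧ GenericallyComputes C B ∧
      ¬ GenericallyComputes C A := by
  refine ⟨Nat.log 2 ⁻¹' haltingSet, (2 ^ ·) '' haltingSet, ∅, ?_, ?_, fun h => ?_⟩
  · have hpre : Nat.log 2 ⁻¹' haltingSet =
        (fun n => 2 ^ Nat.log 2 n) ⁻¹' ((2 ^ ·) '' haltingSet) := by
      ext n
      simp [(Nat.pow_right_injective le_rfl).mem_set_image]
    rw [hpre]
    exact TuringRedTo.genericallyComputes <|
      turingRedTo_preimage (Primrec.nat_pow.comp (.const 2) (Primrec.nat_log 2)) _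
  · refine GenericallyComputable.genericallyComputes
      (genericallyComputable_of_disjoint ?_ (density1_compl_range_pow one_lt_two) ?_) ∅
    · exact (computablePred_mem_range_pow one_lt_two).not
    · exact Set.disjoint_compl_left_iff_subset.2 (Set.image_subset_range _ _)
  · have hempty : Computable (setChar ∅) := (Computable.const 0).of_eq fun n => by simp [setChar]
    exact not_computablePred_haltingSet
      (computablePred_of_genericallyComputable_log_preimage (h.genericallyComputable hempty))
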